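/- For all integers m ≥ 1, n ≥ 1 and every h with 1 ≤ h ≤ m, det(A′_n − 2·cos((2h−1)π/(2m))·I_n) = 2·T_n(1 + 2·cos²((2(m−h)+1)π/(4m))). -/
import Mathlib


open Real Polynomial
open Matrix

/-- The `n × n` matrix `A′_n`: all diagonal entries `4`, entry `-1` at every position
`(h,k)` with `|h-k| = 1` except at position `(n, n-1)` (the last row, next-to-last
column), where the entry is `-2`, and `0` elsewhere. -/
def matA' (n : ℕ) : Matrix (Fin n) (Fin n) ℝ :=
  Matrix.of fun h k =>
    if h = k then 4
    else if (h : ℕ) = n - 1 ∧ (k : ℕ) + 2 = n then -2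
    else if |(h : ℤ) - (k : ℤ)| = 1 then -1 else 0



noncomputable def Eseq (d : ℝ) : ℕ → ℝ
  | 0 => 1
  | 1 => d
  | (n+2) => d * Eseq d (n+1) - Eseq d n

noncomputable def gN (d : ℝ) (i j : ℕ) : ℝ :=
  if i = j then d else if |(i:ℤ) - (j:ℤ)| = 1 then -1 else 0

lemma gN_diag (d : ℝ) {i j : ℕ} (h : i = j) : gN d i j = d := by simp [gN, h]

lemma gN_adj (d : ℝ) {i j : ℕ} (h : i + 1 = j ∨ j + 1 = i) : gN d i j = -1 := by
  unfold gN
  rw [if_neg (by omega), if_pos (by rw [abs_eq (by norm_num)]; omega)]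

lemma gN_far (d : ℝ) {i j : ℕ} (h : i + 2 ≤ j ∨ j + 2 ≤ i) : gN d i j = 0 := by
  unfold gN
  rw [if_neg (by omega), if_neg (by
    intro habs; rw [abs_eq (by norm_num)] at habs; omega)]

noncomputable def Nmat (d : ℝ) (n : ℕ) : Matrix (Fin n) (Fin n) ℝ :=
  Matrix.of fun i j => gN d i j

lemma Nmat_apply (d : ℝ) (n : ℕ) (i j : Fin n) : Nmat d n i j = gN d i j := rfl

lemma detP (d : ℝ) (n : ℕ) :
    Matrix.det ((Nmat d (n+2)).submatrix (Fin.last (n+1)).succAbove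
      (Fin.castSucc (Fin.last n)).succAbove) = - Matrix.det (Nmat d n) := by
  rw [Matrix.det_succ_column _ (Fin.last n), Fin.sum_univ_castSucc]
  have hcol : (Fin.castSucc (Fin.last n)).succAbove (Fin.last n) = Fin.last (n+1) := by
    rw [Fin.succAbove_of_le_castSucc _ _ (le_refl _)]
    rfl
  have hzero : ∀ i : Fin n,
      ((Nmat d (n+2)).submatrix (Fin.last (n+1)).succAbove
        (Fin.castSucc (Fin.last n)).succAbove) (Fin.castSucc i) (Fin.last n) = 0 := by
    intro i
    simp only [Matrix.submatrix_apply, hcol, Fin.succAbove_last, Nmat_apply]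
    have h1 : (i:ℕ) < n := i.isLt
    have hv1 : ((Fin.castSucc (Fin.castSucc i) : Fin (n+2)) : ℕ) = (i:ℕ) := rfl
    have hv2 : ((Fin.last (n+1) : Fin (n+2)) : ℕ) = n + 1 := rfl
    rw [hv1, hv2, gN_far d (by omega)]
  rw [Finset.sum_eq_zero (fun i _ => by rw [hzero i, mul_zero, zero_mul]), zero_add]
  have hdiag : ((Nmat d (n+2)).submatrix (Fin.last (n+1)).succAbove
      (Fin.castSucc (Fin.last n)).succAbove) (Fin.last n) (Fin.last n) = -1 := by
    simp only [Matrix.submatrix_apply, hcol, Fin.succAbove_last, Nmat_apply]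
    have hv1 : ((Fin.castSucc (Fin.last n) : Fin (n+2)) : ℕ) = n := rfl
    have hv2 : ((Fin.last (n+1) : Fin (n+2)) : ℕ) = n + 1 := rfl
    rw [hv1, hv2, gN_adj d (by omega)]
  rw [hdiag]
  have hsub : (((Nmat d (n+2)).submatrix (Fin.last (n+1)).succAbove
      (Fin.castSucc (Fin.last n)).succAbove).submatrix (Fin.last n).succAbove
      (Fin.last n).succAbove) = Nmat d n := by
    ext i k
    simp only [Matrix.submatrix_apply, Fin.succAbove_last, Nmat_apply]
    rw [Fin.succAbove_of_castSucc_lt _ _ (by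
      simp only [Fin.lt_def, Fin.coe_castSucc, Fin.val_last]
      exact k.isLt)]
    rfl
  rw [hsub]
  have : ((-1:ℝ)) ^ ((Fin.last n : ℕ) + (Fin.last n : ℕ)) = 1 :=
    Even.neg_one_pow ⟨n, by simp⟩
  rw [this]
  ring

lemma detN (d : ℝ) : ∀ n : ℕ, Matrix.det (Nmat d n) = Eseq d n
  | 0 => Matrix.det_fin_zero
  | 1 => by
    rw [Matrix.det_fin_one, Nmat_apply, gN_diag d rfl]
    rfl
  | (n+2) => by
    rw [Matrix.det_succ_row _ (Fin.last (n+1)), Fin.sum_univ_castSucc, Fin.sum_univ_castSucc]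
    have hzero : ∀ j : Fin n,
        (Nmat d (n+2)) (Fin.last (n+1)) (Fin.castSucc (Fin.castSucc j)) = 0 := by
      intro j
      have hv1 : ((Fin.last (n+1) : Fin (n+2)) : ℕ) = n + 1 := rfl
      have hv2 : ((Fin.castSucc (Fin.castSucc j) : Fin (n+2)) : ℕ) = (j:ℕ) := rfl
      rw [Nmat_apply, hv1, hv2, gN_far d (by have := j.isLt; omega)]
    rw [Finset.sum_eq_zero (fun j _ => by rw [hzero j]; ring), zero_add]
    have he1 : (Nmat d (n+2)) (Fin.last (n+1)) (Fin.castSucc (Fin.last n)) = -1 := by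
      have hv1 : ((Fin.last (n+1) : Fin (n+2)) : ℕ) = n + 1 := rfl
      have hv2 : ((Fin.castSucc (Fin.last n) : Fin (n+2)) : ℕ) = n := rfl
      rw [Nmat_apply, hv1, hv2, gN_adj d (by omega)]
    have he2 : (Nmat d (n+2)) (Fin.last (n+1)) (Fin.last (n+1)) = d := by
      rw [Nmat_apply, gN_diag d rfl]
    have hsub2 : ((Nmat d (n+2)).submatrix (Fin.last (n+1)).succAbove
        (Fin.last (n+1)).succAbove) = Nmat d (n+1) := by
      ext i k
      simp only [Matrix.submatrix_apply, Fin.succAbove_last, Nmat_apply]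
      rfl
    rw [he1, he2, hsub2, detP d n, detN d n, detN d (n+1)]
    have hs1 : ((-1:ℝ)) ^ ((Fin.last (n+1) : ℕ) + ((Fin.castSucc (Fin.last n) : Fin (n+2)) : ℕ))
        = -1 := Odd.neg_one_pow ⟨n, by simp [Fin.last]; ring⟩
    have hs2 : ((-1:ℝ)) ^ ((Fin.last (n+1) : ℕ) + ((Fin.last (n+1) : Fin (n+2)) : ℕ)) = 1 :=
      Even.neg_one_pow ⟨n+1, by simp [Fin.last]⟩
    rw [hs1, hs2]
    show -1 * -1 * - Eseq d n + 1 * d * Eseq d (n+1) = Eseq d (n+2)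
    show -1 * -1 * - Eseq d n + 1 * d * Eseq d (n+1) = d * Eseq d (n+1) - Eseq d n
    ring

lemma M_apply (c : ℝ) (n : ℕ) (i j : Fin n) :
    (matA' n - c • (1 : Matrix (Fin n) (Fin n) ℝ)) i j =
      if (i:ℕ) = (j:ℕ) then 4 - c
      else if (i:ℕ) = n - 1 ∧ (j:ℕ) + 2 = n then -2
      else if |(i:ℤ) - (j:ℤ)| = 1 then -1 else 0 := by
  simp only [Matrix.sub_apply, Matrix.smul_apply, Matrix.one_apply, matA', Matrix.of_apply,
    smul_eq_mul, Fin.ext_iff]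
  split_ifs <;> ring

lemma detM1 (c : ℝ) : Matrix.det (matA' 1 - c • (1 : Matrix (Fin 1) (Fin 1) ℝ)) = 4 - c := by
  rw [Matrix.det_fin_one, M_apply]
  norm_num

lemma detMstep (c : ℝ) (n : ℕ) :
    Matrix.det (matA' (n+2) - c • (1 : Matrix (Fin (n+2)) (Fin (n+2)) ℝ)) =
      (4 - c) * Eseq (4-c) (n+1) - 2 * Eseq (4-c) n := by
  have hsubM : ∀ (j : Fin (n+2)),
      ((matA' (n+2) - c • (1 : Matrix (Fin (n+2)) (Fin (n+2)) ℝ)).submatrix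
        (Fin.last (n+1)).succAbove j.succAbove) =
      ((Nmat (4-c) (n+2)).submatrix (Fin.last (n+1)).succAbove j.succAbove) := by
    intro j
    ext a b
    simp only [Matrix.submatrix_apply, Fin.succAbove_last, Nmat_apply, M_apply]
    have hva : ((Fin.castSucc a : Fin (n+2)) : ℕ) = (a:ℕ) := rfl
    rw [hva]
    have ha : (a:ℕ) < n+1 := a.isLt
    unfold gN
    split_ifs <;> first | rfl | omega
  rw [Matrix.det_succ_row _ (Fin.last (n+1)), Fin.sum_univ_castSucc, Fin.sum_univ_castSucc]
  have hzero : ∀ j : Fin n,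
      (matA' (n+2) - c • (1 : Matrix (Fin (n+2)) (Fin (n+2)) ℝ))
        (Fin.last (n+1)) (Fin.castSucc (Fin.castSucc j)) = 0 := by
    intro j
    rw [M_apply]
    have hv1 : ((Fin.last (n+1) : Fin (n+2)) : ℕ) = n + 1 := rfl
    have hv2 : ((Fin.castSucc (Fin.castSucc j) : Fin (n+2)) : ℕ) = (j:ℕ) := rfl
    rw [hv1, hv2]
    have := j.isLt
    rw [if_neg (by omega), if_neg (by omega), if_neg (by
      intro habs; rw [abs_eq (by norm_num)] at habs; omega)]
  rw [Finset.sum_eq_zero (fun j _ => by rw [hzero j]; ring), zero_add]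
  have he1 : (matA' (n+2) - c • (1 : Matrix (Fin (n+2)) (Fin (n+2)) ℝ))
      (Fin.last (n+1)) (Fin.castSucc (Fin.last n)) = -2 := by
    rw [M_apply]
    have hv1 : ((Fin.last (n+1) : Fin (n+2)) : ℕ) = n + 1 := rfl
    have hv2 : ((Fin.castSucc (Fin.last n) : Fin (n+2)) : ℕ) = n := rfl
    rw [hv1, hv2, if_neg (by omega), if_pos (by omega)]
  have he2 : (matA' (n+2) - c • (1 : Matrix (Fin (n+2)) (Fin (n+2)) ℝ))
      (Fin.last (n+1)) (Fin.last (n+1)) = 4 - c := by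
    rw [M_apply, if_pos rfl]
  have hsub2 : ((Nmat (4-c) (n+2)).submatrix (Fin.last (n+1)).succAbove
      (Fin.last (n+1)).succAbove) = Nmat (4-c) (n+1) := by
    ext i k
    simp only [Matrix.submatrix_apply, Fin.succAbove_last, Nmat_apply]
    rfl
  rw [he1, he2, hsubM, hsubM, hsub2, detP (4-c) n, detN, detN]
  have hs1 : ((-1:ℝ)) ^ ((Fin.last (n+1) : ℕ) + ((Fin.castSucc (Fin.last n) : Fin (n+2)) : ℕ))
      = -1 := Odd.neg_one_pow ⟨n, by simp [Fin.last]; ring⟩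
  have hs2 : ((-1:ℝ)) ^ ((Fin.last (n+1) : ℕ) + ((Fin.last (n+1) : Fin (n+2)) : ℕ)) = 1 :=
    Even.neg_one_pow ⟨n+1, by simp [Fin.last]⟩
  rw [hs1, hs2]
  ring

lemma Teval (x : ℝ) (k : ℤ) : (Chebyshev.T ℝ (k+2)).eval x
    = 2*x*(Chebyshev.T ℝ (k+1)).eval x - (Chebyshev.T ℝ k).eval x := by
  rw [Chebyshev.T_add_two]
  simp

lemma cheb (x : ℝ) : ∀ n : ℕ, (2*x) * Eseq (2*x) (n+1) - 2 * Eseq (2*x) n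
    = 2 * (Chebyshev.T ℝ ((n:ℤ)+2)).eval x
  | 0 => by
    have h2 : ((0:ℕ):ℤ) + 2 = 2 := by norm_num
    rw [h2, Chebyshev.T_two]
    show (2*x) * (2*x) - 2 * 1 = _
    simp only [eval_sub, eval_mul, eval_pow, eval_X, eval_one, eval_ofNat]
    ring
  | 1 => by
    have h3 : ((1:ℕ):ℤ) + 2 = 1 + 2 := by norm_num
    rw [h3, Teval x 1]
    rw [show ((1:ℤ)+1) = 2 from by norm_num, Chebyshev.T_two, Chebyshev.T_one]
    show (2*x) * ((2*x)*(2*x) - 1) - 2 * (2*x) = _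
    simp only [eval_sub, eval_mul, eval_pow, eval_X, eval_one, eval_ofNat]
    ring
  | (n+2) => by
    have ih1 := cheb x (n+1)
    have ih0 := cheb x n
    have hE3 : Eseq (2*x) (n+3) = (2*x) * Eseq (2*x) (n+2) - Eseq (2*x) (n+1) := rfl
    have hE2 : Eseq (2*x) (n+2) = (2*x) * Eseq (2*x) (n+1) - Eseq (2*x) n := rfl
    have hTe := Teval x ((n:ℤ)+2)
    have hi1 : ((n:ℤ)+2+1) = ((n+1:ℕ):ℤ)+2 := by push_cast; ring
    have hig : (((n+2:ℕ)):ℤ)+2 = (n:ℤ)+2+2 := by push_cast; ring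
    rw [hi1] at hTe
    rw [show n+1+1 = n+2 from rfl] at ih1
    rw [hig, hTe, hE3, hE2]
    linear_combination (2*x) * ih1 - ih0 - (4*x^2) * hE2

lemma detM (c : ℝ) : ∀ n : ℕ, 1 ≤ n →
    Matrix.det (matA' n - c • (1 : Matrix (Fin n) (Fin n) ℝ))
      = 2 * (Chebyshev.T ℝ (n:ℤ)).eval ((4 - c)/2)
  | 0, h => absurd h (by norm_num)
  | 1, _ => by
    rw [detM1, show ((1:ℕ):ℤ) = 1 from rfl, Chebyshev.T_one, eval_X]
    ring
  | (n+2), _ => by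
    have key := cheb ((4-c)/2) n
    have h4c : 2 * ((4-c)/2) = 4 - c := by ring
    rw [h4c] at key
    rw [detMstep, show (((n+2:ℕ)):ℤ) = (n:ℤ)+2 from by push_cast; ring, key]

theorem charpoly_matA'_value_eq_chebyshevT_oddodd (m n : ℕ) (hm : 1 ≤ m) (hn : 1 ≤ n)
    (h : ℕ) (hh1 : 1 ≤ h) (hh2 : h ≤ m) :
    Matrix.det
        (matA' n - (2 * Real.cos ((2 * h - 1) * π / (2 * m))) •
          (1 : Matrix (Fin n) (Fin n) ℝ)) =
      2 * (Polynomial.Chebyshev.T ℝ n).eval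
        (1 + 2 * Real.cos ((2 * ((m : ℝ) - h) + 1) * π / (4 * m)) ^ 2) := by
  have hc := detM (2 * Real.cos ((2*(h:ℝ)-1)*π/(2*(m:ℝ)))) n hn
  have harg : (1 : ℝ) + 2 * Real.cos ((2 * ((m : ℝ) - h) + 1) * π / (4 * m)) ^ 2
      = (4 - 2 * Real.cos ((2*(h:ℝ)-1)*π/(2*(m:ℝ))))/2 := by
    have hm' : (m:ℝ) ≠ 0 := Nat.cast_ne_zero.mpr (by omega)
    have h2φ : 2 * ((2*((m:ℝ)-h)+1)*π/(4*(m:ℝ))) = π - (2*(h:ℝ)-1)*π/(2*(m:ℝ)) := by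
      field_simp
      ring
    have h1 : 2 * Real.cos ((2*((m:ℝ)-h)+1)*π/(4*(m:ℝ))) ^ 2
        = Real.cos (2 * ((2*((m:ℝ)-h)+1)*π/(4*(m:ℝ)))) + 1 := by
      rw [Real.cos_two_mul]; ring
    rw [h1, h2φ, Real.cos_pi_sub]
    ring
  rw [harg, hc]
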